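/- Let Σ = {0,1,2,3} with ⊕ the group operation of Z₂ × Z₂ (bitwise XOR), let lₙ(x₁,…,xₙ) = x₁ ⊕ ⋯ ⊕ xₙ, and define lₙ• by lₙ•(x) = lₙ(x) ⊕ 2 if x ∈ {0,2}ⁿ, and lₙ•(x) = lₙ(x) otherwise. Then lₙ• is an n-ary quasigroup, and for n ≥ 3 its autotopy group has order exactly 2^{n+1}. -/

import Mathlib

def IsNQuasigroup {α : Type} {n : ℕ} (f : (Fin n → α) → α) : Prop :=
  ∀ (i : Fin n) (x : Fin n → α), Function.Bijective (fun a => f (Function.update x i a))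

def IsAutotopy {α : Type} {n : ℕ} (f : (Fin n → α) → α)
    (θ : Fin (n + 1) → Equiv.Perm α) : Prop :=
  ∀ x : Fin n → α, f (fun i => θ i.succ (x i)) = θ 0 (f x)

/-- `⊕` on `Σ = {0,1,2,3}`: bitwise XOR (the group operation of `Z₂ × Z₂`). -/
def xor4 (x y : Fin 4) : Fin 4 :=
  ⟨x.val ^^^ y.val, Nat.xor_lt_two_pow (n := 2) x.isLt y.isLt⟩

/-- `lₙ(x₁,…,xₙ) = x₁ ⊕ ⋯ ⊕ xₙ`. -/
def linQ {n : ℕ} (x : Fin n → Fin 4) : Fin 4 := (List.ofFn x).foldr xor4 0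

/-- `lₙ•(x) = lₙ(x) ⊕ 2` if `x ∈ {0,2}ⁿ`, and `lₙ•(x) = lₙ(x)` otherwise. -/
def linBullet {n : ℕ} (x : Fin n → Fin 4) : Fin 4 :=
  if ∀ i, x i = 0 ∨ x i = 2 then xor4 (linQ x) 2 else linQ x

/-!
Write `V = ZMod 2 × ZMod 2` for `Σ` read in binary, high bit first. Then `lₙ•` becomes
`y ↦ ∑ yᵢ + [∀ i, yᵢ.2 = 0] • (1, 0)`. Its correction term only depends on the second
coordinates, which are added linearly, so it is a quasigroup.

For an autotopy `η`, the second coordinates of the autotopy equation are additive in the inputs;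
varying two inputs at a time shows that each `ηᵢ` maps the cosets of `{0, (1, 0)}` to cosets, i.e.
`ηᵢ a = a + (cᵢ + sᵢ a.2, tᵢ)`. On inputs `(0, xᵢ)` the first coordinates then say that an affine
function of `x ∈ Z₂ⁿ` equals `[x = 0] + [x = t]`. For `n ≥ 3` this forces `t = 0`, a common slope
`s` and `c₀ = ∑ cᵢ`, so the autotopies are parametrised by `(s, c₁, …, cₙ)`.
-/

section Transport

open Function

variable {α β : Type} {n : ℕ} {f : (Fin n → α) → α} {g : (Fin n → β) → β}

lemma IsNQuasigroup.of_equiv (e : α ≃ β) (hfg : ∀ x, e (f x) = g (e ∘ x))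
    (hg : IsNQuasigroup g) : IsNQuasigroup f := by
  intro i x
  have : (fun a => f (update x i a)) = e.symm ∘ (fun b => g (update (e ∘ x) i b)) ∘ e := by
    funext a
    rw [comp_apply, comp_apply, ← comp_update, ← hfg, Equiv.symm_apply_apply]
  rw [this]
  exact e.symm.bijective.comp ((hg i _).comp e.bijective)

lemma isAutotopy_iff_of_equiv (e : α ≃ β) (hfg : ∀ x, e (f x) = g (e ∘ x))
    (θ : Fin (n + 1) → Equiv.Perm α) :
    IsAutotopy f θ ↔ IsAutotopy g (fun i => e.permCongr (θ i)) := by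
  have hg : ∀ y, g y = e (f (e.symm ∘ y)) := fun y => by rw [hfg]; congr; funext; simp
  simp only [IsAutotopy, Equiv.permCongr_apply, hg, comp_def, Equiv.symm_apply_apply,
    e.apply_eq_iff_eq]
  exact ⟨fun h y => h _, fun h x => by simpa using h (e ∘ x)⟩

lemma card_autotopy_eq_of_equiv (e : α ≃ β) (hfg : ∀ x, e (f x) = g (e ∘ x)) :
    Nat.card {θ // IsAutotopy f θ} = Nat.card {η // IsAutotopy g η} :=
  Nat.card_congr <| Equiv.subtypeEquiv (Equiv.piCongrRight fun _ => e.permCongr)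
    (isAutotopy_iff_of_equiv e hfg)

end Transport

section AffineIdentities

open Finset

variable {ι : Type*} [Fintype ι] [DecidableEq ι]

lemma coeffs_eq_of_sum_add_mul_eq {R : Type*} [CommRing R] {c s : ι → R} {c₀ s₀ : R}
    (h : ∀ x : ι → R, ∑ i, (c i + s i * x i) = c₀ + s₀ * ∑ i, x i) :
    c₀ = ∑ i, c i ∧ ∀ i, s i = s₀ := by
  have h0 : ∑ i, c i = c₀ := by simpa using h 0
  refine ⟨h0.symm, fun i => ?_⟩
  have hi := h (Pi.single i 1)
  simp only [mul_comm (s _), ← Pi.single_mul_left_apply, sum_add_distrib, sum_pi_single',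
    mem_univ, if_true, mul_one] at hi
  linear_combination hi - h0

-- If `t m ≠ 0`, two further indices `j, k` give four points `0, eⱼ, eₖ, eⱼ + eₖ` at which the
-- affine left-hand side sums to `0` but the right-hand side sums to `1`.
lemma eq_zero_of_sum_add_indicator (hι : 3 ≤ Fintype.card ι) {c s t : ι → ZMod 2}
    {c₀ s₀ : ZMod 2}
    (h : ∀ x : ι → ZMod 2, ∑ i, (c i + s i * x i) + (if x = t then 1 else 0) =
      (if x = 0 then 1 else 0) + (c₀ + s₀ * ∑ i, x i)) :
    t = 0 := by
  by_contra ht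
  obtain ⟨m, hm⟩ : ∃ m, t m ≠ 0 := by simpa [funext_iff] using ht
  obtain ⟨j, hj, k, hk, hjk⟩ : ∃ j ∈ univ.erase m, ∃ k ∈ univ.erase m, j ≠ k := by
    rw [← one_lt_card, card_erase_of_mem (mem_univ m), card_univ]
    omega
  have hjm : j ≠ m := ne_of_mem_erase hj
  have hkm : k ≠ m := ne_of_mem_erase hk
  have hne (x : ι → ZMod 2) (hx : x m = 0) : x ≠ t := fun h => hm (h ▸ hx)
  have hj0 : (Pi.single j 1 : ι → ZMod 2) ≠ 0 := fun h => by simpa using congrFun h j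
  have hk0 : (Pi.single k 1 : ι → ZMod 2) ≠ 0 := fun h => by simpa using congrFun h k
  have hjk0 : (Pi.single j 1 + Pi.single k 1 : ι → ZMod 2) ≠ 0 := fun h => by
    simpa [hjk] using congrFun h j
  have h₀ := h 0
  have h₁ := h (Pi.single j 1)
  have h₂ := h (Pi.single k 1)
  have h₃ := h (Pi.single j 1 + Pi.single k 1)
  simp only [Pi.zero_apply, mul_zero, add_zero, hne, ↓reduceIte, sum_const_zero, sum_add_distrib,
    ne_eq, hjm.symm, hkm.symm, not_false_eq_true, Pi.single_eq_of_ne, hj0, hk0, hjk0,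
    sum_pi_single', mem_univ, mul_one, zero_add, Pi.add_apply, mul_add] at h₀ h₁ h₂ h₃
  grind

end AffineIdentities

namespace LinBullet

open Finset Function

variable {n : ℕ}

abbrev V : Type := ZMod 2 × ZMod 2

def bits : Fin 4 ≃ V := (finProdFinEquiv (m := 2) (n := 2)).symm

lemma bits_xor4 (a b : Fin 4) : bits (xor4 a b) = bits a + bits b := by
  revert a b; decide

lemma bits_linQ (x : Fin n → Fin 4) : bits (linQ x) = ∑ i, bits (x i) := by
  have foldr_xor4 (l : List (Fin 4)) : bits (l.foldr xor4 0) = (l.map bits).sum := by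
    induction l with
    | nil => decide
    | cons a l ih => simp [bits_xor4, ih]
  rw [linQ, foldr_xor4, List.map_ofFn, List.sum_ofFn]
  rfl

def linBulletV (y : Fin n → V) : V :=
  ∑ i, y i + if ∀ i, (y i).2 = 0 then (1, 0) else 0

lemma bits_linBullet (x : Fin n → Fin 4) : bits (linBullet x) = linBulletV (bits ∘ x) := by
  have hH : ∀ a : Fin 4, (bits a).2 = 0 ↔ a = 0 ∨ a = 2 := by decide
  simp only [linBullet, linBulletV, comp_apply, hH]
  split_ifs <;> simp [bits_xor4, bits_linQ, show bits 2 = (1, 0) by decide]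

lemma snd_linBulletV (y : Fin n → V) : (linBulletV y).2 = ∑ i, (y i).2 := by
  simp only [linBulletV, Prod.snd_add, Prod.snd_sum, apply_ite Prod.snd, Prod.snd_zero, ite_self,
    add_zero]

lemma fst_linBulletV (y : Fin n → V) :
    (linBulletV y).1 = ∑ i, (y i).1 + if ∀ i, (y i).2 = 0 then 1 else 0 := by
  simp only [linBulletV, Prod.fst_add, Prod.fst_sum, apply_ite Prod.fst, Prod.fst_zero]

theorem isNQuasigroup_linBulletV : IsNQuasigroup (linBulletV (n := n)) := by
  intro i y
  rw [← Finite.injective_iff_bijective]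
  intro a b hab
  have hsum (c : V) : ∑ j, update y i c j = c + ∑ j ∈ univ \ {i}, y j :=
    sum_update_of_mem (mem_univ i) _ _
  have hsnd : a.2 = b.2 := by
    have := congrArg Prod.snd hab
    rwa [snd_linBulletV, snd_linBulletV, ← Prod.snd_sum, ← Prod.snd_sum, hsum, hsum,
      Prod.snd_add, Prod.snd_add, add_left_inj] at this
  have hcond : (∀ j, (update y i a j).2 = 0) ↔ (∀ j, (update y i b j).2 = 0) :=
    forall_congr' fun j => by rcases eq_or_ne j i with rfl | hj <;> simp [*]
  simpa [linBulletV, hcond, hsum] using hab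

def linBullet2 (a b : V) : V := a + b + if a.2 = 0 ∧ b.2 = 0 then (1, 0) else 0

lemma linBulletV_single_add_single {j k : Fin n} (hjk : j ≠ k) (a b : V) :
    linBulletV (Pi.single j a + Pi.single k b) = linBullet2 a b := by
  have hcond : (∀ i, ((Pi.single j a : Fin n → V) i + (Pi.single k b : Fin n → V) i).2 = 0) ↔
      a.2 = 0 ∧ b.2 = 0 := by
    refine ⟨fun h => ⟨by simpa [hjk] using h j, by simpa [hjk.symm] using h k⟩, ?_⟩
    rintro ⟨ha, hb⟩ i
    rcases eq_or_ne i j with rfl | hij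
    · simp [hjk, ha]
    rcases eq_or_ne i k with rfl | hik
    · simp [hij, hb]
    simp [hij, hik]
  simp only [linBulletV, Pi.add_apply, hcond, sum_add_distrib, sum_pi_single', mem_univ, if_true,
    linBullet2]

-- Among the 16 maps `V → ZMod 2`, those for which `f (linBullet2 a b)` splits as `g a + h b` are
-- the constants and `a ↦ a.2 + f 0`.
lemma eq_snd_add_of_linBullet2_separable : ∀ f : V → ZMod 2, Surjective f →
    (∀ a b, f (linBullet2 a b) + f (linBullet2 0 0) + f (linBullet2 a 0) + f (linBullet2 0 b) = 0) →
    ∀ a, f a = a.2 + f 0 := by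
  decide

-- `g` permutes each fibre `{p, p + (1, 0)}` of `Prod.snd`, so `g a - a` only depends on `a.2`.
set_option maxRecDepth 100000 in
lemma exists_eq_add_of_snd_eq (t : ZMod 2) (g : V → V) (hg : Injective g)
    (h : ∀ a, (g a).2 = a.2 + t) : ∃ c s : ZMod 2, ∀ a, g a = a + (c + s * a.2, t) := by
  obtain rfl : t = (g 0).2 := by simpa using (h 0).symm
  revert g
  decide

section Autotopy

variable {η : Fin (n + 1) → Equiv.Perm V}

lemma snd_linBullet2_add_of_isAutotopy (hη : IsAutotopy linBulletV η) {j k : Fin n}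
    (hjk : j ≠ k) (a a' b b' : V) :
    (η 0 (linBullet2 a b)).2 + (η 0 (linBullet2 a' b')).2 =
      (η j.succ a).2 + (η j.succ a').2 + ((η k.succ b).2 + (η k.succ b').2) := by
  have hsnd (y : Fin n → V) : (η 0 (linBulletV y)).2 = ∑ i, (η i.succ (y i)).2 := by
    rw [← hη, snd_linBulletV]
  -- Summed over both inputs, every coordinate other than `j` and `k` contributes twice.
  have hpoint (i : Fin n) :
      (η i.succ ((Pi.single j a + Pi.single k b : Fin n → V) i)).2 +
        (η i.succ ((Pi.single j a' + Pi.single k b' : Fin n → V) i)).2 =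
      (Pi.single j ((η j.succ a).2 + (η j.succ a').2) : Fin n → ZMod 2) i +
        (Pi.single k ((η k.succ b).2 + (η k.succ b').2) : Fin n → ZMod 2) i := by
    rcases eq_or_ne i j with rfl | hij
    · simp [hjk]
    rcases eq_or_ne i k with rfl | hik
    · simp [hij]
    simp [hij, hik, CharTwo.add_self_eq_zero]
  rw [← linBulletV_single_add_single hjk, ← linBulletV_single_add_single hjk, hsnd, hsnd,
    ← sum_add_distrib, sum_congr rfl fun i _ => hpoint i, sum_add_distrib, sum_pi_single',
    sum_pi_single']
  simp

lemma snd_apply_of_isAutotopy (hn : 2 ≤ n) (hη : IsAutotopy linBulletV η) (i : Fin (n + 1))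
    (a : V) : (η i a).2 = a.2 + (η i 0).2 := by
  have : Nontrivial (Fin n) := Fin.nontrivial_iff_two_le.2 hn
  obtain ⟨j, k, hjk⟩ := exists_pair_ne (Fin n)
  have h0 : ∀ a, (η 0 a).2 = a.2 + (η 0 0).2 := by
    refine eq_snd_add_of_linBullet2_separable _ (Prod.snd_surjective.comp (η 0).surjective) ?_
    intro a b
    have h₁ := snd_linBullet2_add_of_isAutotopy hη hjk a 0 b 0
    have h₂ := snd_linBullet2_add_of_isAutotopy hη hjk a 0 0 b
    grind
  refine Fin.cases (h0 a) (fun j => ?_) i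
  obtain ⟨k, hkj⟩ := exists_ne j
  have := snd_linBullet2_add_of_isAutotopy hη hkj.symm a 0 0 0
  have hB (a : V) : (linBullet2 a 0).2 = a.2 := by simp [linBullet2, apply_ite Prod.snd]
  rw [h0 (linBullet2 a 0), h0 (linBullet2 0 0), hB, hB, Prod.snd_zero] at this
  clear h0
  grind

def shear (c s : ZMod 2) : Equiv.Perm V :=
  Involutive.toPerm (fun a => a + (c + s * a.2, 0)) fun a => by
    ext <;> simp [add_assoc, CharTwo.add_self_eq_zero]

lemma shear_apply (c s : ZMod 2) (a : V) : shear c s a = a + (c + s * a.2, 0) := rfl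

lemma shear_injective {c s c' s' : ZMod 2} (h : shear c s = shear c' s') : c = c' ∧ s = s' := by
  have h₀ := congrArg Prod.fst (Equiv.congr_fun h 0)
  have h₁ := congrArg Prod.fst (Equiv.congr_fun h (0, 1))
  simp only [shear_apply, Prod.fst_add, Prod.snd_zero, mul_zero, add_zero, zero_add,
    mul_one] at h₀ h₁
  exact ⟨h₀, by linear_combination h₁ - h₀⟩

def autotopyOf (s : ZMod 2) (c : Fin n → ZMod 2) : Fin (n + 1) → Equiv.Perm V :=
  Fin.cons (shear (∑ i, c i) s) fun i => shear (c i) s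

lemma isAutotopy_autotopyOf (s : ZMod 2) (c : Fin n → ZMod 2) :
    IsAutotopy linBulletV (autotopyOf s c) := by
  intro y
  ext
  · simp only [autotopyOf, Fin.cons_succ, Fin.cons_zero, shear_apply, fst_linBulletV,
      snd_linBulletV, Prod.fst_add, Prod.snd_add, add_zero, sum_add_distrib, mul_sum]
    ring
  · simp [autotopyOf, shear_apply, snd_linBulletV]

lemma autotopyOf_injective :
    Injective fun p : ZMod 2 × (Fin n → ZMod 2) => autotopyOf p.1 p.2 := by
  rintro ⟨s, c⟩ ⟨s', c'⟩ h
  have hs : s = s' := (shear_injective (congrFun h 0)).2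
  exact Prod.ext hs (funext fun i => (shear_injective (congrFun h i.succ)).1)

lemma exists_autotopyOf_eq (hn : 3 ≤ n) (hη : IsAutotopy linBulletV η) :
    ∃ p : ZMod 2 × (Fin n → ZMod 2), autotopyOf p.1 p.2 = η := by
  obtain ⟨t, hsnd⟩ : ∃ t : Fin (n + 1) → ZMod 2, ∀ i a, (η i a).2 = a.2 + t i :=
    ⟨_, snd_apply_of_isAutotopy (by omega) hη⟩
  choose c s hcs using fun i => exists_eq_add_of_snd_eq (t i) (η i) (η i).injective (hsnd i)
  have hfst (x : Fin n → ZMod 2) :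
      ∑ i, (c i.succ + s i.succ * x i) + (if x = fun i => t i.succ then 1 else 0) =
        (if x = 0 then 1 else 0) + (c 0 + s 0 * ∑ i, x i) := by
    simpa [hcs, fst_linBulletV, snd_linBulletV, CharTwo.add_eq_zero, funext_iff] using
      congrArg Prod.fst (hη fun i => (0, x i))
  have ht : (fun i : Fin n => t i.succ) = 0 :=
    eq_zero_of_sum_add_indicator (by rwa [Fintype.card_fin]) hfst
  have ht₀ : t 0 = 0 := by
    simpa [snd_linBulletV, hsnd, congrFun ht, eq_comm] using congrArg Prod.snd (hη 0)
  obtain ⟨hc₀, hs⟩ := coeffs_eq_of_sum_add_mul_eq fun x => by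
    have := hfst x
    rwa [ht, add_comm, add_right_inj] at this
  refine ⟨(s 0, fun i => c i.succ), funext fun i => Equiv.ext fun a => ?_⟩
  refine Fin.cases ?_ (fun i => ?_) i
  · simp [autotopyOf, shear_apply, hcs, ht₀, hc₀]
  · simp [autotopyOf, shear_apply, hcs, hs, congrFun ht i]

end Autotopy

lemma card_autotopy_linBulletV (hn : 3 ≤ n) :
    Nat.card {η // IsAutotopy (linBulletV (n := n)) η} = 2 ^ (n + 1) := by
  have hbij : Bijective fun p : ZMod 2 × (Fin n → ZMod 2) =>
      (⟨autotopyOf p.1 p.2, isAutotopy_autotopyOf p.1 p.2⟩ : {η // IsAutotopy linBulletV η}) :=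
    ⟨fun p q h => autotopyOf_injective (congrArg Subtype.val h),
      fun η => (exists_autotopyOf_eq hn η.2).imp fun _ h => Subtype.ext h⟩
  rw [← Nat.card_eq_of_bijective _ hbij, Nat.card_prod, Nat.card_fun, Nat.card_zmod,
    Nat.card_fin, pow_succ, mul_comm]

end LinBullet

/-- `lₙ•` is an `n`-ary quasigroup and, for `n ≥ 3`, its autotopy group has order
exactly `2^{n+1}`. -/
theorem card_autotopy_linBullet (n : ℕ) :
    IsNQuasigroup (linBullet (n := n)) ∧
    (3 ≤ n →
      Nat.card {θ : Fin (n + 1) → Equiv.Perm (Fin 4) // IsAutotopy linBullet θ}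
        = 2 ^ (n + 1)) :=
  ⟨LinBullet.isNQuasigroup_linBulletV.of_equiv LinBullet.bits LinBullet.bits_linBullet,
    fun hn => by
      rw [card_autotopy_eq_of_equiv LinBullet.bits LinBullet.bits_linBullet,
        LinBullet.card_autotopy_linBulletV hn]⟩
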